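/- For all natural numbers n, m with m ≥ 1: n^m = Σ_{k=1}^{m} A(m, k-1) · C(n+m-k, m), where A denotes the Eulerian numbers. -/

import Mathlib

/-!
Multiplying `∑ j^m X^j` by `(1 - X)^(m+1)` yields a series whose coefficient of `X^k` is, by the
explicit formula, `A(m, k-1)`; it vanishes beyond degree `m` because the `(m+1)`-st forward
difference of `x ↦ x^m` is zero. Multiplying back by `(1 - X)^-(m+1) = ∑ C(m+l, m) X^l` and
comparing coefficients of `X^n` gives the identity.
-/

/-- The Eulerian number A(m,k), via the explicit formula. -/
def eulerian (m k : ℕ) : ℤ :=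
  ∑ i ∈ Finset.range (k + 1), (-1) ^ i * (Nat.choose (m + 1) i) * ((k + 1 - i : ℕ) : ℤ) ^ m

open Finset PowerSeries fwdDiff

namespace PowerSeries

variable {R : Type*} [CommRing R]

theorem coeff_one_sub_X_pow (d k : ℕ) :
    coeff k ((1 - X : R⟦X⟧) ^ d) = (-1) ^ k * d.choose k := by
  have h : (1 - X : R⟦X⟧) ^ d =
      rescale (-1) (((1 + Polynomial.X : Polynomial R) ^ d : Polynomial R) : R⟦X⟧) := by
    simp [sub_eq_add_neg]
  rw [h, coeff_rescale, Polynomial.coeff_coe, Polynomial.coeff_one_add_X_pow]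

theorem coeff_add_one_sub_X_pow_mul_mk (f : R → R) (d n : ℕ) :
    coeff (n + d) ((1 - X) ^ d * PowerSeries.mk fun j : ℕ ↦ f j) = (Δ_[1])^[d] f n := by
  induction d generalizing n with
  | zero => simp
  | succ d ih =>
    rw [Function.iterate_succ_apply', fwdDiff, pow_succ', mul_assoc, sub_mul, one_mul, map_sub,
      ← add_assoc, coeff_succ_X_mul, ih, add_right_comm, ih]
    push_cast
    ring

end PowerSeries

/-- `X` times the `m`-th Eulerian polynomial. -/
noncomputable def eulerianSeries (m : ℕ) : ℤ⟦X⟧ :=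
  (1 - X) ^ (m + 1) * PowerSeries.mk fun j : ℕ ↦ (j : ℤ) ^ m

theorem coeff_zero_eulerianSeries {m : ℕ} (hm : m ≠ 0) : coeff 0 (eulerianSeries m) = 0 := by
  simp [eulerianSeries, hm]

theorem coeff_succ_eulerianSeries {m : ℕ} (hm : m ≠ 0) (k : ℕ) :
    coeff (k + 1) (eulerianSeries m) = eulerian m k := by
  rw [eulerianSeries, coeff_mul, Nat.sum_antidiagonal_eq_sum_range_succ fun i j ↦
      coeff i ((1 - X : ℤ⟦X⟧) ^ (m + 1)) * coeff j (PowerSeries.mk fun j : ℕ ↦ (j : ℤ) ^ m),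
    sum_range_succ, eulerian]
  simp [coeff_one_sub_X_pow, hm]

theorem eulerian_eq_zero_of_le {m k : ℕ} (hm : m ≠ 0) (hk : m ≤ k) : eulerian m k = 0 := by
  obtain ⟨n, rfl⟩ := Nat.exists_eq_add_of_le hk
  rw [← coeff_succ_eulerianSeries hm, add_right_comm, add_comm, eulerianSeries,
    coeff_add_one_sub_X_pow_mul_mk (fun r : ℤ ↦ r ^ m),
    fwdDiff_iter_pow_eq_zero_of_lt m.lt_succ_self, Pi.zero_apply]

theorem pow_eq_sum_coeff_eulerianSeries_mul_choose (n m : ℕ) :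
    (n : ℤ) ^ m = ∑ k ∈ range (n + 1), coeff k (eulerianSeries m) * (n + m - k).choose m := by
  have h : (PowerSeries.mk fun j : ℕ ↦ (j : ℤ) ^ m) =
      eulerianSeries m * PowerSeries.mk fun j ↦ ((m + j).choose m : ℤ) := by
    rw [eulerianSeries, mul_comm, ← mul_assoc, mk_add_choose_mul_one_sub_pow_eq_one, one_mul]
  have hn := congrArg (coeff n) h
  rw [coeff_mk, coeff_mul, Nat.sum_antidiagonal_eq_sum_range_succ_mk] at hn
  rw [hn]
  refine sum_congr rfl fun k hk ↦ ?_
  rw [coeff_mk, show m + (n - k) = n + m - k by grind]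

theorem worpitzky_reversed (n m : ℕ) (hm : 1 ≤ m) :
    (n : ℤ) ^ m = ∑ k ∈ Finset.Icc 1 m, eulerian m (k - 1) * (Nat.choose (n + m - k) m : ℤ) := by
  have hm0 : m ≠ 0 := by omega
  set term := fun k ↦ coeff k (eulerianSeries m) * ((n + m - k).choose m : ℤ)
  calc (n : ℤ) ^ m = ∑ k ∈ range (n + 1), term k := pow_eq_sum_coeff_eulerianSeries_mul_choose n m
    _ = ∑ k ∈ range (n + m + 1), term k := sum_subset (by grind) fun k _ hk ↦ by
      simp [term, Nat.choose_eq_zero_of_lt (by grind : n + m - k < m)]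
    _ = ∑ k ∈ Icc 1 m, term k := .symm <| sum_subset (by grind) fun k _ hk ↦ by
      rcases k with _ | k
      · simp [term, coeff_zero_eulerianSeries hm0]
      · simp [term, coeff_succ_eulerianSeries hm0, eulerian_eq_zero_of_le hm0 (by grind : m ≤ k)]
    _ = _ := sum_congr rfl fun k hk ↦ by
      obtain ⟨j, rfl⟩ : ∃ j, k = j + 1 := ⟨k - 1, by grind⟩
      simp [term, coeff_succ_eulerianSeries hm0]
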